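/- arXiv:2210.12805 — 3 statements merged into one kernel-verified Lean document; each statement's English description precedes it below -/
import Mathlib

section
/- Let X be an N×N real symmetric matrix with nonnegative entries, let α ∈ ℝ^N have nonnegative entries, let A = diag(α), and let ε ∈ (0,1). If Xα ≤ (1−ε)·1 entrywise and α_n · (X·1)_n ≤ 1−ε for every n (where 1 is the all-ones vector), then the ℓ₂ operator norm of AX satisfies ‖AX‖₂ ≤ 1−ε. -/
/-!
Writing `M = diag(α) X`, the hypotheses say that `M` has nonnegative entries, row sums
`αₙ (X𝟙)ₙ ≤ 1 - ε` and, by symmetry of `X`, column sums `(Xα)ₘ ≤ 1 - ε`. The Schur test then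
bounds `‖M‖₂` by `√(r c)` when the row sums are at most `r` and the column sums at most `c`: by
Cauchy–Schwarz with weights `Mᵢⱼ`, `((Mv)ᵢ)² ≤ (∑ⱼ Mᵢⱼ)(∑ⱼ Mᵢⱼ vⱼ²)`, and summing over `i` and
exchanging the sums gives `‖Mv‖² ≤ r c ‖v‖²`.
-/

/-- The ℓ₂ operator norm (largest singular value) of a real square matrix. -/
noncomputable def l2OpNorm {N : ℕ} (M : Matrix (Fin N) (Fin N) ℝ) : ℝ :=
  ‖Matrix.toEuclideanCLM (𝕜 := ℝ) M‖

namespace Matrix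

variable {n : Type*} [Fintype n] {M : Matrix n n ℝ} {r c : ℝ}

lemma sq_mulVec_apply_le_of_nonneg (hM : ∀ i j, 0 ≤ M i j) (v : n → ℝ) (i : n) :
    (M *ᵥ v) i ^ 2 ≤ (∑ j, M i j) * ∑ j, M i j * v j ^ 2 :=
  Finset.sum_sq_le_sum_mul_sum_of_sq_le_mul _ (fun j _ => hM i j)
    (fun j _ => mul_nonneg (hM i j) (sq_nonneg _)) (fun j _ => le_of_eq (by ring))

lemma sum_sq_mulVec_le_of_nonneg (hM : ∀ i j, 0 ≤ M i j) (hr : 0 ≤ r)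
    (hrow : ∀ i, ∑ j, M i j ≤ r) (hcol : ∀ j, ∑ i, M i j ≤ c) (v : n → ℝ) :
    ∑ i, (M *ᵥ v) i ^ 2 ≤ r * c * ∑ j, v j ^ 2 :=
  calc ∑ i, (M *ᵥ v) i ^ 2
      ≤ ∑ i, r * ∑ j, M i j * v j ^ 2 := Finset.sum_le_sum fun i _ =>
        (sq_mulVec_apply_le_of_nonneg hM v i).trans <| mul_le_mul_of_nonneg_right (hrow i) <|
          Finset.sum_nonneg fun j _ => mul_nonneg (hM i j) (sq_nonneg _)
    _ = r * ∑ j, (∑ i, M i j) * v j ^ 2 := by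
        simp only [← Finset.mul_sum, Finset.sum_mul]
        rw [Finset.sum_comm]
    _ ≤ r * ∑ j, c * v j ^ 2 := mul_le_mul_of_nonneg_left
        (Finset.sum_le_sum fun j _ => mul_le_mul_of_nonneg_right (hcol j) (sq_nonneg _)) hr
    _ = r * c * ∑ j, v j ^ 2 := by rw [← Finset.mul_sum, mul_assoc]

theorem norm_toEuclideanCLM_le_sqrt_of_nonneg [DecidableEq n] (hM : ∀ i j, 0 ≤ M i j) (hr : 0 ≤ r)
    (hrow : ∀ i, ∑ j, M i j ≤ r) (hcol : ∀ j, ∑ i, M i j ≤ c) :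
    ‖toEuclideanCLM (𝕜 := ℝ) M‖ ≤ √(r * c) := by
  refine ContinuousLinearMap.opNorm_le_bound _ (Real.sqrt_nonneg _) fun x => ?_
  rw [← Real.sqrt_sq (norm_nonneg x), ← Real.sqrt_mul' _ (sq_nonneg _)]
  refine Real.le_sqrt_of_sq_le ?_
  simpa only [EuclideanSpace.real_norm_sq_eq, ofLp_toEuclideanCLM] using
    sum_sq_mulVec_le_of_nonneg hM hr hrow hcol x.ofLp

end Matrix

open Matrix in
/-- Lemma 1: polytopic sufficient condition for `‖AX‖₂ ≤ 1 - ε`. -/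
theorem stmt_0 {N : ℕ} (X : Matrix (Fin N) (Fin N) ℝ) (α : Fin N → ℝ) (ε : ℝ)
    (hXsymm : X.IsSymm) (hXnonneg : ∀ n m, 0 ≤ X n m) (hαnonneg : ∀ n, 0 ≤ α n)
    (hε : ε ∈ Set.Ioo (0 : ℝ) 1)
    (hcol : ∀ n, X.mulVec α n ≤ 1 - ε)
    (hrow : ∀ n, α n * X.mulVec (fun _ => 1) n ≤ 1 - ε) :
    l2OpNorm (Matrix.diagonal α * X) ≤ 1 - ε := by
  have hδ : 0 ≤ 1 - ε := by linarith [hε.2]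
  have hentry : ∀ i j, (diagonal α * X) i j = α i * X i j := fun i j => diagonal_mul α X i j
  have hrowsum : ∀ i, ∑ j, (diagonal α * X) i j ≤ 1 - ε := fun i => by
    simpa only [hentry, ← Finset.mul_sum, mulVec, dotProduct, mul_one] using hrow i
  have hcolsum : ∀ j, ∑ i, (diagonal α * X) i j ≤ 1 - ε := fun j => by
    simpa only [hentry, fun i => hXsymm.apply j i, mul_comm (α _), mulVec, dotProduct] using hcol j
  calc l2OpNorm (diagonal α * X)
      ≤ √((1 - ε) * (1 - ε)) := norm_toEuclideanCLM_le_sqrt_of_nonneg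
        (fun i j => (hentry i j).symm ▸ mul_nonneg (hαnonneg i) (hXnonneg i j)) hδ hrowsum hcolsum
    _ = 1 - ε := Real.sqrt_mul_self hδ
end

section
/- For the 2×2 matrix M = [[1/2, 1/2],[1/3, 2/3]], the ℓ₂ operator norm satisfies ‖M‖₂ > 1; equivalently, there exists a vector x ∈ ℝ² with ‖Mx‖₂ > ‖x‖₂. Consequently, for X = [[1,1],[1,2]] and α = (1/2, 1/3), the vector α satisfies the row-sum condition α_n·(X·1)_n ≤ 1 for every n with equality, yet ‖diag(α)·X‖₂ > 1. -/
/-! The vector `(1, 2)` is mapped by `M = [[1/2, 1/2], [1/3, 2/3]]` to `(3/2, 5/3)`, and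
`(3/2)² + (5/3)² = 181/36 > 5 = 1² + 2²`. Since `M = diag(1/2, 1/3) · [[1,1],[1,2]]`, the same
vector is expanded by `diag(α) X`, although the row sums `2, 3` of `X` give `α_n (X 1)_n = 1`. -/

open Matrix

theorem ContinuousLinearMap.one_lt_opNorm_of_norm_lt_norm_apply {𝕜 𝕜₂ E F : Type*}
    [SeminormedAddCommGroup E] [SeminormedAddCommGroup F] [NontriviallyNormedField 𝕜]
    [NontriviallyNormedField 𝕜₂] [NormedSpace 𝕜 E] [NormedSpace 𝕜₂ F] {σ₁₂ : 𝕜 →+* 𝕜₂}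
    [RingHomIsometric σ₁₂] (f : E →SL[σ₁₂] F) {x : E} (hx : ‖x‖ < ‖f x‖) : 1 < ‖f‖ := by
  by_contra! hf
  have := f.le_of_opNorm_le hf x
  linarith

theorem one_lt_l2OpNorm_of_norm_lt {N : ℕ} (M : Matrix (Fin N) (Fin N) ℝ)
    {x : EuclideanSpace ℝ (Fin N)} (hx : ‖x‖ < ‖Matrix.toEuclideanCLM (𝕜 := ℝ) M x‖) :
    1 < l2OpNorm M :=
  ContinuousLinearMap.one_lt_opNorm_of_norm_lt_norm_apply _ hx

theorem toEuclideanCLM_counterexample_apply :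
    Matrix.toEuclideanCLM (𝕜 := ℝ) !![(1 : ℝ)/2, 1/2; 1/3, 2/3] !₂[1, 2] = !₂[3/2, 5/3] := by
  ext i
  fin_cases i <;> simp [Matrix.toEuclideanCLM_toLp] <;> norm_num

theorem norm_lt_norm_toEuclideanCLM_counterexample :
    ‖(!₂[1, 2] : EuclideanSpace ℝ (Fin 2))‖ <
      ‖Matrix.toEuclideanCLM (𝕜 := ℝ) !![(1 : ℝ)/2, 1/2; 1/3, 2/3] !₂[1, 2]‖ := by
  rw [toEuclideanCLM_counterexample_apply, ← sq_lt_sq₀ (norm_nonneg _) (norm_nonneg _),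
    EuclideanSpace.real_norm_sq_eq, EuclideanSpace.real_norm_sq_eq]
  simp only [Fin.sum_univ_two, cons_val_zero, cons_val_one]
  norm_num

theorem diagonal_mul_counterexample :
    Matrix.diagonal ![(1 : ℝ)/2, 1/3] * !![(1 : ℝ), 1; 1, 2] = !![(1 : ℝ)/2, 1/2; 1/3, 2/3] := by
  ext i j
  fin_cases i <;> fin_cases j <;> norm_num

theorem rowSum_counterexample (n : Fin 2) :
    ![(1 : ℝ)/2, 1/3] n * (!![(1 : ℝ), 1; 1, 2]).mulVec (fun _ => 1) n = 1 := by
  fin_cases n <;> simp [mulVec, dotProduct, Fin.sum_univ_two] <;> norm_num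

/-- The counterexample showing the row-sum condition (6b) alone does not imply
`‖diag(α) X‖₂ < 1`: for `M = [[1/2, 1/2], [1/3, 2/3]]` one has `‖M‖₂ > 1`
(equivalently, some vector is strictly expanded), while for `X = [[1,1],[1,2]]`
and `α = (1/2, 1/3)` the row-sum condition holds with equality yet
`‖diag(α) X‖₂ > 1`. -/
theorem stmt_4 :
    l2OpNorm !![(1 : ℝ)/2, 1/2; 1/3, 2/3] > 1 ∧
    (∃ x : EuclideanSpace ℝ (Fin 2),
      ‖Matrix.toEuclideanCLM (𝕜 := ℝ) !![(1 : ℝ)/2, 1/2; 1/3, 2/3] x‖ > ‖x‖) ∧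
    (∀ n, ![(1 : ℝ)/2, 1/3] n *
      (!![(1 : ℝ), 1; 1, 2]).mulVec (fun _ => 1) n = 1) ∧
    l2OpNorm (Matrix.diagonal ![(1 : ℝ)/2, 1/3] * !![(1 : ℝ), 1; 1, 2]) > 1 := by
  have hM := one_lt_l2OpNorm_of_norm_lt _ norm_lt_norm_toEuclideanCLM_counterexample
  refine ⟨hM, ⟨_, norm_lt_norm_toEuclideanCLM_counterexample⟩, rowSum_counterexample, ?_⟩
  rwa [diagonal_mul_counterexample]
end

section
/- For parameters v̄ ∈ ℝ, 0 < δ < σ, q̄ > 0, and α := q̄/(σ−δ), and for every v ∈ ℝ, the value f(v) of the symmetric Volt/VAR rule is the unique minimizer over q ∈ [−q̄, q̄] of the strictly convex function g(q) = q²/(2α) + δ·|q| + q·(v − v̄). -/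
/-!
For the cost `g = vvCost α δ (v - vbar)` and any `f`, completing the square gives
`g q - g f ≥ (q - f)² / (2α) + (q - f) (f / α + w + v - vbar)` whenever
`w` is a subgradient of `δ |·|` at `f`. For `f = vvRule vbar δ σ qbar v` on one of the three
inner branches of the rule, `w` can be chosen so that the last bracket vanishes; on the two
saturated branches it has the sign that makes the product nonnegative for every
`q ∈ [-qbar, qbar]`. Either way `g q > g f` for `q ≠ f`.
-/

/-- The symmetric Volt/VAR rule with reference voltage `vbar`, deadband `δ`,
saturation voltage offset `σ`, and saturation reactive power `qbar`;
its slope is `α = qbar / (σ - δ)`. -/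
noncomputable def vvRule (vbar δ σ qbar : ℝ) (v : ℝ) : ℝ :=
  if v ≤ vbar - σ then qbar
  else if v ≤ vbar - δ then -(qbar / (σ - δ)) * (v - vbar + δ)
  else if v ≤ vbar + δ then 0
  else if v ≤ vbar + σ then -(qbar / (σ - δ)) * (v - vbar - δ)
  else -qbar

open Set

noncomputable def vvCost (α δ c q : ℝ) : ℝ := q ^ 2 / (2 * α) + δ * |q| + q * c

theorem StrictConvexOn.div_const {E : Type*} [AddCommMonoid E] [Module ℝ E] {s : Set E}
    {f : E → ℝ} (hf : StrictConvexOn ℝ s f) {c : ℝ} (hc : 0 < c) :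
    StrictConvexOn ℝ s fun x => f x / c := by
  refine ⟨hf.1, fun x hx y hy hxy a b ha hb hab => ?_⟩
  have := div_lt_div_of_pos_right (hf.2 hx hy hxy ha hb hab) hc
  simp only [smul_eq_mul] at this ⊢
  rwa [add_div, mul_div_assoc, mul_div_assoc] at this

theorem strictConvexOn_vvCost {α δ : ℝ} (hα : 0 < α) (hδ : 0 ≤ δ) (c : ℝ) :
    StrictConvexOn ℝ univ (vvCost α δ c) :=
  (((Even.strictConvexOn_pow even_two two_ne_zero).div_const (by positivity)).add_convexOn
    ((convexOn_norm convex_univ).smul hδ)).add_convexOn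
    ((LinearMap.mulRight ℝ c).convexOn convex_univ)

theorem vvCost_lt_of_subgradient {α δ c w f q : ℝ} (hα : 0 < α) (hw : |w| ≤ δ)
    (hwf : w * f = δ * |f|) (hne : q ≠ f) (hnormal : 0 ≤ (q - f) * (f / α + w + c)) :
    vvCost α δ c f < vvCost α δ c q := by
  have hsub : w * q ≤ δ * |q| :=
    (le_abs_self _).trans (abs_mul w q ▸ mul_le_mul_of_nonneg_right hw (abs_nonneg q))
  have hsq : 0 < (q - f) ^ 2 / (2 * α) := by
    have := sub_ne_zero.mpr hne
    positivity
  have hsplit : vvCost α δ c q - vvCost α δ c f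
      = (q - f) ^ 2 / (2 * α) + (q - f) * (f / α + w + c)
        + (δ * |q| - w * q) - (δ * |f| - w * f) := by
    unfold vvCost
    field_simp
    ring
  linarith

theorem vvRule_mem_Icc {vbar δ σ qbar : ℝ} (hδσ : δ < σ) (hq : 0 ≤ qbar) (v : ℝ) :
    vvRule vbar δ σ qbar v ∈ Icc (-qbar) qbar := by
  have hα : 0 ≤ qbar / (σ - δ) := div_nonneg hq (by linarith)
  have hαq : qbar / (σ - δ) * (σ - δ) = qbar := div_mul_cancel₀ _ (by linarith)
  unfold vvRule
  split_ifs <;> constructor <;> nlinarith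

theorem vvRule_optimality {vbar δ σ qbar : ℝ} (hδ : 0 ≤ δ) (hδσ : δ < σ) (hq : 0 < qbar)
    (v : ℝ) : ∃ w, |w| ≤ δ ∧ w * vvRule vbar δ σ qbar v = δ * |vvRule vbar δ σ qbar v| ∧
      ∀ q ∈ Icc (-qbar) qbar, 0 ≤ (q - vvRule vbar δ σ qbar v) *
        (vvRule vbar δ σ qbar v / (qbar / (σ - δ)) + w + (v - vbar)) := by
  have hσδ : 0 < σ - δ := by linarith
  have hα : 0 < qbar / (σ - δ) := div_pos hq hσδ
  unfold vvRule
  split_ifs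
  · refine ⟨δ, (abs_of_nonneg hδ).le, by rw [abs_of_pos hq], fun q hq' => ?_⟩
    have : qbar / (qbar / (σ - δ)) = σ - δ := by field_simp
    exact mul_nonneg_of_nonpos_of_nonpos (by linarith [hq'.2]) (by linarith)
  · refine ⟨δ, (abs_of_nonneg hδ).le, ?_, fun q _ => ?_⟩
    · rw [abs_of_nonneg (by nlinarith)]
    · exact le_of_eq (by field_simp; ring)
  · refine ⟨-(v - vbar), abs_le.mpr ⟨by linarith, by linarith⟩, by simp, fun q _ => by simp⟩
  · refine ⟨-δ, (abs_neg δ ▸ abs_of_nonneg hδ).le, ?_, fun q _ => ?_⟩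
    · rw [abs_of_nonpos (by nlinarith)]; ring
    · exact le_of_eq (by field_simp; ring)
  · refine ⟨-δ, (abs_neg δ ▸ abs_of_nonneg hδ).le, by rw [abs_of_neg (by linarith)]; ring,
      fun q hq' => ?_⟩
    have : -qbar / (qbar / (σ - δ)) = -(σ - δ) := by field_simp
    exact mul_nonneg (by linarith [hq'.1]) (by linarith)

/-- Proximal characterization: `f(v)` is the unique minimizer over `[-qbar, qbar]` of the
strictly convex function `g(q) = q²/(2α) + δ|q| + q (v - vbar)`. -/
theorem stmt_8 (vbar δ σ qbar : ℝ) (hδ : 0 < δ) (hδσ : δ < σ) (hq : 0 < qbar) (v : ℝ) :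
    StrictConvexOn ℝ (Set.Icc (-qbar) qbar)
      (fun q : ℝ => q ^ 2 / (2 * (qbar / (σ - δ))) + δ * |q| + q * (v - vbar)) ∧
    vvRule vbar δ σ qbar v ∈ Set.Icc (-qbar) qbar ∧
    (∀ q ∈ Set.Icc (-qbar) qbar, q ≠ vvRule vbar δ σ qbar v →
      (vvRule vbar δ σ qbar v) ^ 2 / (2 * (qbar / (σ - δ)))
        + δ * |vvRule vbar δ σ qbar v| + (vvRule vbar δ σ qbar v) * (v - vbar)
      < q ^ 2 / (2 * (qbar / (σ - δ))) + δ * |q| + q * (v - vbar)) := by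
  have hα : 0 < qbar / (σ - δ) := div_pos hq (by linarith)
  obtain ⟨w, hw, hwf, hnormal⟩ := vvRule_optimality (vbar := vbar) hδ.le hδσ hq v
  exact ⟨(strictConvexOn_vvCost hα hδ.le _).subset (subset_univ _) (convex_Icc _ _),
    vvRule_mem_Icc hδσ hq.le v,
    fun q hq' hne => vvCost_lt_of_subgradient hα hw hwf hne (hnormal q hq')⟩
end
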